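/- arXiv:2112.10288 — 15 statements merged into one kernel-verified Lean document; each statement's English description precedes it below -/
import Mathlib

section
/- Let N --k--> G --e--> H be a Schreier extension of monoids. Then e is the cokernel of k: for every monoid K and every monoid homomorphism f : G →* K satisfying f(k(n)) = 1 for all n ∈ N, there exists a unique monoid homomorphism f̄ : H →* K with f̄ ∘ e = f. -/
/-- For a Schreier extension of monoids N --k--> G --e--> H, the map `e`
is the cokernel of `k`: every monoid homomorphism `f : G →* K` killing the image of
`k` factors uniquely through `e`. -/
theorem schreier_cokernel
    {N G H K : Type*} [Monoid N] [Monoid G] [Monoid H] [Monoid K]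
    (k : N →* G) (e : G →* H)
    (hk : Function.Injective k) (he : Function.Surjective e)
    (hker : ∀ g : G, (∃ n : N, k n = g) ↔ e g = 1)
    (hschreier : ∀ h : H, ∃ u : G, e u = h ∧
      ∀ g : G, e g = h → ∃! n : N, k n * u = g)
    (f : G →* K) (hf : ∀ n : N, f (k n) = 1) :
    ∃! fbar : H →* K, fbar.comp e = f := by
  -- key: f is constant on fibers of e
  have key : ∀ g g' : G, e g = e g' → f g = f g' := by
    intro g g' hgg
    obtain ⟨u, hu, hun⟩ := hschreier (e g')
    obtain ⟨n, hn, -⟩ := hun g hgg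
    obtain ⟨n', hn', -⟩ := hun g' rfl
    rw [← hn, ← hn', map_mul, map_mul, hf, hf]
  set s : H → G := Function.surjInv he with hs
  have hes : ∀ h, e (s h) = h := Function.surjInv_eq he
  refine ⟨{ toFun := fun h => f (s h),
            map_one' := ?_, map_mul' := ?_ }, ?_, ?_⟩
  · have h1 : e (s 1) = 1 := hes 1
    obtain ⟨n, hn⟩ := (hker (s 1)).2 h1
    show f (s 1) = 1
    rw [← hn, hf]
  · intro x y
    have : e (s (x * y)) = e (s x * s y) := by rw [map_mul, hes, hes, hes]
    show f (s (x*y)) = f (s x) * f (s y)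
    rw [key _ _ this, map_mul]
  · ext g
    exact key _ _ (hes (e g))
  · intro fbar hfbar
    ext h
    have := DFunLike.congr_fun hfbar (s h)
    simp only [MonoidHom.comp_apply, hes] at this
    exact this
end

section
/- Given monoids H and N and a Schreier datum (φ, χ), let G(φ,χ) be the monoid on H × N with multiplication (h, n) · (h', n') = (h h', n · φ(h, n') · χ(h, h')) and unit (1,1). Then the first projection π : G(φ,χ) → H, π(h,n) = h, is a surjective monoid homomorphism; the map ι : N → G(φ,χ), ι(n) = (1, n), is an injective monoid homomorphism whose image is exactly π⁻¹(1); and the resulting extension N --ι--> G(φ,χ) --π--> H is Schreier: for each h ∈ H the element u_h = (h, 1) satisfies π(u_h) = h and every (h, n) ∈ π⁻¹(h) factors uniquely as ι(n) · u_h. -/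
/-- A Schreier datum for monoids `H` and `N`: functions `φ : H × N → N` (curried) and
`χ : H × H → N` satisfying the axioms of Rédei's characterisation of Schreier
extensions. -/
structure SchreierDatum (H N : Type*) [Monoid H] [Monoid N] where
  phi : H → N → N
  chi : H → H → N
  phi_one : ∀ h : H, phi h 1 = 1
  phi_mul : ∀ (h : H) (n n' : N), phi h (n * n') = phi h n * phi h n'
  one_phi : ∀ n : N, phi 1 n = n
  compat : ∀ (h h' : H) (n : N),
    phi h (phi h' n) * chi h h' = chi h h' * phi (h * h') n
  chi_one_left : ∀ h : H, chi 1 h = 1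
  chi_one_right : ∀ h : H, chi h 1 = 1
  cocycle : ∀ x y z : H,
    chi x y * chi (x * y) z = phi x (chi y z) * chi x (y * z)

/-- The multiplication `(h, n) · (h', n') = (h h', n · φ(h, n') · χ(h, h'))` on `H × N`
determined by the data `(φ, χ)`. -/
def schreierMul {H N : Type*} [Monoid H] [Monoid N]
    (phi : H → N → N) (chi : H → H → N) (p q : H × N) : H × N :=
  (p.1 * q.1, p.2 * phi p.1 q.2 * chi p.1 q.1)

/-- For a Schreier datum `(φ, χ)` and the monoid `G(φ,χ)` on `H × N`
(multiplication `schreierMul`, unit `(1,1)`), the first projection `π` is a surjective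
monoid homomorphism, `ι : n ↦ (1, n)` is an injective monoid homomorphism with image
exactly `π⁻¹(1)`, and the extension `N --ι--> G(φ,χ) --π--> H` is Schreier, with
`u_h = (h, 1)` witnessing the unique factorisation. -/
theorem schreierMul_extension_is_schreier {H N : Type*} [Monoid H] [Monoid N]
    (D : SchreierDatum H N) :
    -- π is a monoid homomorphism
    (∀ p q : H × N, (schreierMul D.phi D.chi p q).1 = p.1 * q.1) ∧
      (((1, 1) : H × N).1 = 1) ∧
      -- π is surjective
      Function.Surjective (fun p : H × N => p.1) ∧
      -- ι is a monoid homomorphism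
      (∀ n n' : N,
        schreierMul D.phi D.chi ((1 : H), n) ((1 : H), n') = ((1 : H), n * n')) ∧
      (((1 : H), (1 : N)) = ((1, 1) : H × N)) ∧
      -- ι is injective
      Function.Injective (fun n : N => (((1 : H), n) : H × N)) ∧
      -- the image of ι is exactly π⁻¹(1)
      (∀ p : H × N, (∃ n : N, ((1 : H), n) = p) ↔ p.1 = 1) ∧
      -- the extension is Schreier, witnessed by u_h = (h, 1)
      (∀ h : H, ((h, (1 : N)) : H × N).1 = h ∧
        ∀ p : H × N, p.1 = h →
          ∃! n : N, schreierMul D.phi D.chi ((1 : H), n) (h, (1 : N)) = p) := by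
  refine ⟨fun p q => rfl, rfl, fun h => ⟨(h, 1), rfl⟩, ?_, rfl, ?_, ?_, ?_⟩
  · intro n n'
    simp [schreierMul, D.one_phi, D.chi_one_left]
  · intro n n' h
    simpa using congrArg Prod.snd h
  · intro p
    constructor
    · rintro ⟨n, rfl⟩; rfl
    · intro h
      exact ⟨p.2, Prod.ext h.symm rfl⟩
  · intro h
    refine ⟨rfl, fun p hp => ?_⟩
    refine ⟨p.2, ?_, ?_⟩
    · simp [schreierMul, D.phi_one, D.chi_one_left, hp]
      exact Prod.ext hp.symm rfl
    · intro n hn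
      have := congrArg Prod.snd hn
      simpa [schreierMul, D.phi_one, D.chi_one_left] using this
end

section
/- Let N --k--> G --e--> H be a Schreier extension of monoids and let u : H → G be a choice of elements with e(u_h) = h for all h, u_1 = 1, and such that every g ∈ G with e(g) = h equals k(n) u_h for a unique n ∈ N. Then there exist unique functions φ : H × N → N and χ : H × H → N satisfying k(φ(h,n)) · u_h = u_h · k(n) and k(χ(h,h')) · u_{h h'} = u_h · u_{h'} for all h, h' ∈ H and n ∈ N; moreover (φ, χ) is a Schreier datum, i.e. it satisfies: φ(h,1) = 1; φ(h, n n') = φ(h,n) φ(h,n'); φ(1,n) = n; φ(h, φ(h',n)) · χ(h,h') = χ(h,h') · φ(h h', n); χ(1,h) = 1 = χ(h,1); and χ(x,y) · χ(x y, z) = φ(x, χ(y,z)) · χ(x, y z). -/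
/-- Given a Schreier extension N --k--> G --e--> H with a choice of
representatives `u : H → G` (with `e (u h) = h`, `u 1 = 1`, and unique factorisation
on each fibre), there are unique functions `φ : H × N → N` and `χ : H × H → N` with
`k(φ(h,n)) · u_h = u_h · k(n)` and `k(χ(h,h')) · u_{h h'} = u_h · u_{h'}`; moreover
any such `(φ, χ)` is a Schreier datum. -/
theorem schreier_extension_gives_datum
    {N G H : Type*} [Monoid N] [Monoid G] [Monoid H]
    (k : N →* G) (e : G →* H)
    (hk : Function.Injective k) (he : Function.Surjective e)
    (hker : ∀ g : G, (∃ n : N, k n = g) ↔ e g = 1)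
    (u : H → G) (hu : ∀ h : H, e (u h) = h) (hu1 : u 1 = 1)
    (hfac : ∀ (h : H) (g : G), e g = h → ∃! n : N, k n * u h = g) :
    (∃! p : (H → N → N) × (H → H → N),
        (∀ (h : H) (n : N), k (p.1 h n) * u h = u h * k n) ∧
          (∀ h h' : H, k (p.2 h h') * u (h * h') = u h * u h')) ∧
      (∀ (φ : H → N → N) (χ : H → H → N),
        (∀ (h : H) (n : N), k (φ h n) * u h = u h * k n) →
        (∀ h h' : H, k (χ h h') * u (h * h') = u h * u h') →
        ∃ D : SchreierDatum H N, D.phi = φ ∧ D.chi = χ) := by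

  have ek : ∀ n : N, e (k n) = 1 := fun n => (hker (k n)).mp ⟨n, rfl⟩
  have cancel : ∀ (h : H) (n n' : N), k n * u h = k n' * u h → n = n' := by
    intro h n n' heq
    have h1 : e (k n' * u h) = h := by rw [map_mul, ek, hu, one_mul]
    obtain ⟨m, hm, hm'⟩ := hfac h _ h1
    exact (hm' n heq).trans (hm' n' rfl).symm
  choose φ hφ _ using fun (h : H) (n : N) =>
    hfac h (u h * k n) (by rw [map_mul, hu, ek, mul_one])
  choose χ hχ _ using fun (h h' : H) =>
    hfac (h * h') (u h * u h') (by rw [map_mul, hu, hu])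
  constructor
  · refine ⟨⟨φ, χ⟩, ⟨hφ, hχ⟩, ?_⟩
    rintro ⟨φ', χ'⟩ ⟨hφ', hχ'⟩
    refine Prod.ext ?_ ?_
    · funext h n
      exact cancel h _ _ ((hφ' h n).trans (hφ h n).symm)
    · funext h h'
      exact cancel (h * h') _ _ ((hχ' h h').trans (hχ h h').symm)
  · intro φ χ hφ hχ
    refine ⟨⟨φ, χ, ?_, ?_, ?_, ?_, ?_, ?_, ?_⟩, rfl, rfl⟩
    · intro h
      refine cancel h _ _ ?_
      rw [hφ, map_one, mul_one, one_mul]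
    · intro h n n'
      refine cancel h _ _ ?_
      calc k (φ h (n * n')) * u h = u h * (k n * k n') := by rw [hφ, map_mul]
        _ = (u h * k n) * k n' := (mul_assoc _ _ _).symm
        _ = (k (φ h n) * u h) * k n' := by rw [hφ]
        _ = k (φ h n) * (u h * k n') := mul_assoc _ _ _
        _ = k (φ h n) * (k (φ h n') * u h) := by rw [hφ]
        _ = k (φ h n * φ h n') * u h := by
              rw [map_mul, mul_assoc (k (φ h n))]
    · intro n
      refine cancel 1 _ _ ?_
      rw [hφ, hu1, mul_one, one_mul]
    · intro h h' n
      refine cancel (h * h') _ _ ?_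
      calc k (φ h (φ h' n) * χ h h') * u (h * h')
          = k (φ h (φ h' n)) * (k (χ h h') * u (h * h')) := by
            rw [map_mul, mul_assoc]
        _ = k (φ h (φ h' n)) * (u h * u h') := by rw [hχ]
        _ = (k (φ h (φ h' n)) * u h) * u h' := (mul_assoc _ _ _).symm
        _ = (u h * k (φ h' n)) * u h' := by rw [hφ]
        _ = u h * (k (φ h' n) * u h') := mul_assoc _ _ _
        _ = u h * (u h' * k n) := by rw [hφ]
        _ = (u h * u h') * k n := (mul_assoc _ _ _).symm
        _ = (k (χ h h') * u (h * h')) * k n := by rw [hχ]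
        _ = k (χ h h') * (u (h * h') * k n) := mul_assoc _ _ _
        _ = k (χ h h') * (k (φ (h * h') n) * u (h * h')) := by rw [hφ]
        _ = k (χ h h' * φ (h * h') n) * u (h * h') := by
              rw [map_mul, mul_assoc (k (χ h h'))]
    · intro h
      refine cancel (1 * h) _ _ ?_
      rw [hχ, hu1, map_one, one_mul, one_mul, one_mul]
    · intro h
      refine cancel (h * 1) _ _ ?_
      rw [hχ, hu1, map_one, mul_one, one_mul, mul_one]
    · intro x y z
      refine cancel (x * y * z) _ _ ?_
      calc k (χ x y * χ (x * y) z) * u (x * y * z)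
          = k (χ x y) * (k (χ (x * y) z) * u ((x * y) * z)) := by
            rw [map_mul, mul_assoc]
        _ = k (χ x y) * (u (x * y) * u z) := by rw [hχ]
        _ = (k (χ x y) * u (x * y)) * u z := (mul_assoc _ _ _).symm
        _ = (u x * u y) * u z := by rw [hχ]
        _ = u x * (u y * u z) := mul_assoc _ _ _
        _ = u x * (k (χ y z) * u (y * z)) := by rw [hχ]
        _ = (u x * k (χ y z)) * u (y * z) := (mul_assoc _ _ _).symm
        _ = (k (φ x (χ y z)) * u x) * u (y * z) := by rw [hφ]
        _ = k (φ x (χ y z)) * (u x * u (y * z)) := mul_assoc _ _ _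
        _ = k (φ x (χ y z)) * (k (χ x (y * z)) * u (x * (y * z))) := by rw [hχ]
        _ = k (φ x (χ y z) * χ x (y * z)) * u (x * y * z) := by
              rw [map_mul, mul_assoc x y z, mul_assoc (k (φ x (χ y z)))]
end

section
/- Let N --k--> G --e--> H be a Schreier extension with chosen representatives u : H → G (e(u_h) = h, u_1 = 1, unique factorization g = k(n) u_h on each fibre) and let (φ, χ) be the associated Schreier datum determined by k(φ(h,n)) u_h = u_h k(n) and k(χ(h,h')) u_{h h'} = u_h u_{h'}. Let G(φ,χ) be the monoid on H × N with multiplication (h,n)·(h',n') = (h h', n φ(h,n') χ(h,h')). Then the map t : G(φ,χ) → G defined by t(h, n) = k(n) · u_h is a monoid isomorphism satisfying e(t(h,n)) = h and t(1, n) = k(n) for all h ∈ H, n ∈ N. -/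
/-- For a Schreier extension N --k--> G --e--> H with chosen
representatives `u` and associated Schreier datum `(φ, χ)` (determined by
`k(φ(h,n)) u_h = u_h k(n)` and `k(χ(h,h')) u_{hh'} = u_h u_{h'}`), the map
`t(h, n) = k(n) · u_h` is a monoid isomorphism from `G(φ,χ)` to `G` with
`e(t(h,n)) = h` and `t(1,n) = k(n)`. -/
theorem schreier_reconstruction_iso
    {N G H : Type*} [Monoid N] [Monoid G] [Monoid H]
    (k : N →* G) (e : G →* H)
    (hk : Function.Injective k) (he : Function.Surjective e)
    (hker : ∀ g : G, (∃ n : N, k n = g) ↔ e g = 1)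
    (u : H → G) (hu : ∀ h : H, e (u h) = h) (hu1 : u 1 = 1)
    (hfac : ∀ (h : H) (g : G), e g = h → ∃! n : N, k n * u h = g)
    (φ : H → N → N) (χ : H → H → N)
    (hφ : ∀ (h : H) (n : N), k (φ h n) * u h = u h * k n)
    (hχ : ∀ h h' : H, k (χ h h') * u (h * h') = u h * u h') :
    -- t is a bijection
    Function.Bijective (fun p : H × N => k p.2 * u p.1) ∧
      -- t is a monoid homomorphism from G(φ,χ) to G
      (∀ p q : H × N,
        k (schreierMul φ χ p q).2 * u (schreierMul φ χ p q).1 =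
          (k p.2 * u p.1) * (k q.2 * u q.1)) ∧
      (k ((1 : H × N).2) * u ((1 : H × N).1) = 1) ∧
      -- t commutes with the cokernel maps
      (∀ p : H × N, e (k p.2 * u p.1) = p.1) ∧
      -- t commutes with the kernel maps
      (∀ n : N, k n * u 1 = k n) := by

  have hek : ∀ n : N, e (k n) = 1 := fun n => (hker (k n)).mp ⟨n, rfl⟩
  have het : ∀ p : H × N, e (k p.2 * u p.1) = p.1 := by
    intro p
    rw [map_mul, hek, one_mul, hu]
  refine ⟨⟨?_, ?_⟩, ?_, ?_, het, ?_⟩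
  · intro p q hpq
    simp only at hpq
    have h1 : p.1 = q.1 := by
      have := congrArg e hpq
      rwa [het p, het q] at this
    have h2 : p.2 = q.2 := by
      obtain ⟨n, _, huniq⟩ := hfac p.1 (k p.2 * u p.1) (het p)
      have e1 := huniq p.2 rfl
      have e2 := huniq q.2 (by show k q.2 * u p.1 = k p.2 * u p.1; rw [hpq, h1])
      rw [e1, ← e2]
    exact Prod.ext h1 h2
  · intro g
    obtain ⟨n, hn, _⟩ := hfac (e g) g rfl
    exact ⟨(e g, n), hn⟩
  · intro p q
    simp only [schreierMul, map_mul]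
    calc k p.2 * k (φ p.1 q.2) * k (χ p.1 q.1) * u (p.1 * q.1)
        = k p.2 * k (φ p.1 q.2) * (k (χ p.1 q.1) * u (p.1 * q.1)) := by
          rw [mul_assoc]
      _ = k p.2 * k (φ p.1 q.2) * (u p.1 * u q.1) := by rw [hχ]
      _ = k p.2 * (k (φ p.1 q.2) * u p.1) * u q.1 := by
          simp [mul_assoc]
      _ = k p.2 * (u p.1 * k q.2) * u q.1 := by rw [hφ]
      _ = k p.2 * u p.1 * (k q.2 * u q.1) := by simp [mul_assoc]
  · simp [hu1]
  · intro n; rw [hu1, mul_one]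
end

section
/- Let H and N be monoids, let (φ₁, χ₁) and (φ₂, χ₂) be Schreier data for H and N, and let ψ : H → N be a function satisfying: ψ(1) = 1; φ₁(h,n) · ψ(h) = ψ(h) · φ₂(h,n) for all h ∈ H, n ∈ N; and χ₁(h,h') · ψ(h h') = φ₁(h, ψ(h')) · ψ(h) · χ₂(h,h') for all h, h' ∈ H. Then the map t_ψ : G(φ₁,χ₁) → G(φ₂,χ₂) defined by t_ψ(h, n) = (h, n · ψ(h)) is a monoid homomorphism satisfying π₂ ∘ t_ψ = π₁ and t_ψ(1, n) = (1, n) for all n ∈ N. -/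
/-- The map `t_ψ (h, n) = (h, n · ψ(h))` induced by a function `ψ : H → N`. -/
def schreierPsiMap {H N : Type*} [Monoid H] [Monoid N] (ψ : H → N) (p : H × N) :
    H × N :=
  (p.1, p.2 * ψ p.1)

/-- Given Schreier data `(φ₁, χ₁)` and `(φ₂, χ₂)` and a function
`ψ : H → N` with `ψ(1) = 1`, `φ₁(h,n) ψ(h) = ψ(h) φ₂(h,n)` and
`χ₁(h,h') ψ(hh') = φ₁(h, ψ(h')) ψ(h) χ₂(h,h')`, the map `t_ψ(h, n) = (h, n ψ(h))` is
a monoid homomorphism `G(φ₁,χ₁) → G(φ₂,χ₂)` over `H` fixing the kernel `N`. -/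
theorem schreierPsiMap_hom {H N : Type*} [Monoid H] [Monoid N]
    (D₁ D₂ : SchreierDatum H N) (ψ : H → N)
    (hψ1 : ψ 1 = 1)
    (hψφ : ∀ (h : H) (n : N), D₁.phi h n * ψ h = ψ h * D₂.phi h n)
    (hψχ : ∀ h h' : H,
      D₁.chi h h' * ψ (h * h') = D₁.phi h (ψ h') * ψ h * D₂.chi h h') :
    -- t_ψ is a monoid homomorphism
    (∀ p q : H × N,
        schreierPsiMap ψ (schreierMul D₁.phi D₁.chi p q) =
          schreierMul D₂.phi D₂.chi (schreierPsiMap ψ p) (schreierPsiMap ψ q)) ∧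
      (schreierPsiMap ψ (1, 1) = ((1, 1) : H × N)) ∧
      -- π₂ ∘ t_ψ = π₁
      (∀ p : H × N, (schreierPsiMap ψ p).1 = p.1) ∧
      -- t_ψ fixes the kernel
      (∀ n : N, schreierPsiMap ψ ((1 : H), n) = ((1 : H), n)) := by
  refine ⟨?_, ?_, ?_, ?_⟩
  · intro p q
    obtain ⟨h, n⟩ := p
    obtain ⟨h', n'⟩ := q
    simp only [schreierPsiMap, schreierMul, Prod.mk.injEq, true_and]
    calc n * D₁.phi h n' * D₁.chi h h' * ψ (h * h')
        = n * D₁.phi h n' * (D₁.chi h h' * ψ (h * h')) := by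
          simp [mul_assoc]
      _ = n * D₁.phi h n' * (D₁.phi h (ψ h') * ψ h * D₂.chi h h') := by
          rw [hψχ]
      _ = n * (D₁.phi h (n' * ψ h') * ψ h) * D₂.chi h h' := by
          simp [D₁.phi_mul, mul_assoc]
      _ = n * (ψ h * D₂.phi h (n' * ψ h')) * D₂.chi h h' := by
          rw [hψφ]
      _ = n * ψ h * D₂.phi h (n' * ψ h') * D₂.chi h h' := by
          simp [mul_assoc]
  · simp [schreierPsiMap, hψ1]
  · intro p; rfl
  · intro n; simp [schreierPsiMap, hψ1]
end

section
/- Let H and N be monoids and let (φ₁, χ₁) and (φ₂, χ₂) be Schreier data for H and N. Every monoid homomorphism t : G(φ₁,χ₁) → G(φ₂,χ₂) satisfying π₂ ∘ t = π₁ and t(1, n) = (1, n) for all n ∈ N is of the form t(h, n) = (h, n · ψ(h)) for a unique function ψ : H → N, and this ψ satisfies ψ(1) = 1, φ₁(h,n) · ψ(h) = ψ(h) · φ₂(h,n) for all h, n, and χ₁(h,h') · ψ(h h') = φ₁(h, ψ(h')) · ψ(h) · χ₂(h,h') for all h, h'. -/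
/-- Every monoid homomorphism `t : G(φ₁,χ₁) → G(φ₂,χ₂)` over `H` which
fixes the kernel `N` is of the form `t(h, n) = (h, n · ψ(h))` for a unique function
`ψ : H → N`, and this `ψ` satisfies `ψ(1) = 1`, `φ₁(h,n) ψ(h) = ψ(h) φ₂(h,n)` and
`χ₁(h,h') ψ(hh') = φ₁(h, ψ(h')) ψ(h) χ₂(h,h')`. -/
theorem schreier_morphism_form {H N : Type*} [Monoid H] [Monoid N]
    (D₁ D₂ : SchreierDatum H N) (t : H × N → H × N)
    (hmul : ∀ p q : H × N,
      t (schreierMul D₁.phi D₁.chi p q) =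
        schreierMul D₂.phi D₂.chi (t p) (t q))
    (hone : t (1, 1) = ((1, 1) : H × N))
    (hfst : ∀ p : H × N, (t p).1 = p.1)
    (hkernel : ∀ n : N, t ((1 : H), n) = ((1 : H), n)) :
    (∃! ψ : H → N, ∀ (h : H) (n : N), t (h, n) = (h, n * ψ h)) ∧
      (∀ ψ : H → N, (∀ (h : H) (n : N), t (h, n) = (h, n * ψ h)) →
        ψ 1 = 1 ∧
          (∀ (h : H) (n : N), D₁.phi h n * ψ h = ψ h * D₂.phi h n) ∧
          (∀ h h' : H,
            D₁.chi h h' * ψ (h * h') = D₁.phi h (ψ h') * ψ h * D₂.chi h h')) := by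

  classical
  set ψ₀ : H → N := fun h => (t (h, 1)).2 with hψ₀
  have hform : ∀ (h : H) (n : N), t (h, n) = (h, n * ψ₀ h) := by
    intro h n
    have e1 : schreierMul D₁.phi D₁.chi ((1 : H), n) (h, 1) = (h, n) := by
      simp [schreierMul, D₁.phi_one, D₁.chi_one_left]
    have e2 := hmul ((1 : H), n) (h, 1)
    rw [e1, hkernel] at e2
    have ht1 : t (h, 1) = (h, ψ₀ h) := Prod.ext (hfst (h, 1)) rfl
    rw [ht1] at e2
    simpa [schreierMul, D₂.one_phi, D₂.chi_one_left] using e2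
  have hψ1 : ψ₀ 1 = 1 := by
    have := hform 1 1
    rw [hone] at this
    have := (Prod.ext_iff.mp this.symm).2
    simpa using this
  have hcomm : ∀ (h : H) (n : N), D₁.phi h n * ψ₀ h = ψ₀ h * D₂.phi h n := by
    intro h n
    have e1 : schreierMul D₁.phi D₁.chi (h, (1:N)) ((1:H), n) = (h, D₁.phi h n) := by
      simp [schreierMul, D₁.chi_one_right]
    have e2 := hmul (h, (1:N)) ((1:H), n)
    rw [e1, hform h 1, hkernel, hform h (D₁.phi h n)] at e2
    have := (Prod.ext_iff.mp e2).2
    simpa [schreierMul, D₂.chi_one_right] using this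
  have hchi : ∀ h h' : H,
      D₁.chi h h' * ψ₀ (h * h') = D₁.phi h (ψ₀ h') * ψ₀ h * D₂.chi h h' := by
    intro h h'
    have e1 : schreierMul D₁.phi D₁.chi (h, (1:N)) (h', (1:N)) = (h * h', D₁.chi h h') := by
      simp [schreierMul, D₁.phi_one]
    have e2 := hmul (h, (1:N)) (h', (1:N))
    rw [e1, hform h 1, hform h' 1, hform (h*h') (D₁.chi h h')] at e2
    have := (Prod.ext_iff.mp e2).2
    simp only [schreierMul, one_mul] at this
    rw [this, hcomm]
  refine ⟨⟨ψ₀, hform, ?_⟩, ?_⟩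
  · intro ψ hψ
    funext h
    have := hψ h 1
    rw [hform h 1] at this
    have := (Prod.ext_iff.mp this).2
    simpa using this.symm
  · intro ψ hψ
    have hψeq : ψ = ψ₀ := by
      funext h
      have := hψ h 1
      rw [hform h 1] at this
      have := (Prod.ext_iff.mp this).2
      simpa using this.symm
    rw [hψeq]
    exact ⟨hψ1, hcomm, hchi⟩
end

section
/- Let H and N be monoids, let (φ₁, χ₁) and (φ₂, χ₂) be Schreier data for H and N, and let ψ : H → N satisfy ψ(1) = 1, φ₁(h,n) ψ(h) = ψ(h) φ₂(h,n), and χ₁(h,h') ψ(h h') = φ₁(h, ψ(h')) ψ(h) χ₂(h,h'). Then the monoid homomorphism t_ψ : G(φ₁,χ₁) → G(φ₂,χ₂), t_ψ(h,n) = (h, n ψ(h)), is an isomorphism of monoids if and only if ψ(h) is a unit of N (i.e. has a two-sided multiplicative inverse) for every h ∈ H. -/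
/-- Given Schreier data `(φ₁, χ₁)`, `(φ₂, χ₂)` and `ψ : H → N` satisfying
the morphism conditions, the monoid homomorphism `t_ψ : G(φ₁,χ₁) → G(φ₂,χ₂)`,
`t_ψ(h,n) = (h, n ψ(h))`, is an isomorphism of monoids if and only if `ψ(h)` is a
unit of `N` for every `h ∈ H`. -/
theorem schreierPsiMap_iso_iff_unit {H N : Type*} [Monoid H] [Monoid N]
    (D₁ D₂ : SchreierDatum H N) (ψ : H → N)
    (hψ1 : ψ 1 = 1)
    (hψφ : ∀ (h : H) (n : N), D₁.phi h n * ψ h = ψ h * D₂.phi h n)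
    (hψχ : ∀ h h' : H,
      D₁.chi h h' * ψ (h * h') = D₁.phi h (ψ h') * ψ h * D₂.chi h h') :
    Function.Bijective (schreierPsiMap ψ) ↔ ∀ h : H, IsUnit (ψ h) := by
  constructor
  · rintro ⟨hi, hs⟩ h
    obtain ⟨⟨h', y⟩, hy⟩ := hs (h, 1)
    simp only [schreierPsiMap, Prod.mk.injEq] at hy
    obtain ⟨rfl, hy⟩ := hy
    refine isUnit_iff_exists.mpr ⟨y, ?_, hy⟩
    have h2 : schreierPsiMap ψ (h', ψ h' * y) = schreierPsiMap ψ (h', 1) := by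
      simp [schreierPsiMap, mul_assoc, hy]
    have := hi h2
    simpa using this
  · intro hu
    constructor
    · rintro ⟨h, n⟩ ⟨h', n'⟩ hpq
      simp only [schreierPsiMap, Prod.mk.injEq] at hpq
      obtain ⟨rfl, h2⟩ := hpq
      obtain ⟨u, hu'⟩ := hu h
      refine Prod.ext rfl ?_
      have := congrArg (· * (↑u⁻¹ : N)) h2
      simpa [← hu', mul_assoc] using this
    · rintro ⟨h, n⟩
      obtain ⟨u, hu'⟩ := hu h
      exact ⟨(h, n * ↑u⁻¹), by simp [schreierPsiMap, ← hu', mul_assoc]⟩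
end

section
/- Let M and N be monoids, let ∼ be a left congruence on M, and let ρ : (M/∼) × N → (M/∼) be a right action of N on M/∼ (ρ(x,1) = x, ρ(ρ(x,n),n') = ρ(x, n n')) that commutes with the left M-action induced by multiplication (m · ρ(x,n) = ρ(m · x, n)). Then there exists a function f : N → M with f(1) ∼ 1 and f(n n') ∼ f(n) f(n') for all n, n' ∈ N, such that ρ([m], n) = [m · f(n)] for all m ∈ M, n ∈ N. -/
/-- The left `M`-action on the quotient `M/∼` by a left congruence `∼`, induced by
multiplication: `m · [m'] = [m * m']`. -/
def quotLeftAct {M : Type*} [Monoid M] (r : M → M → Prop)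
    (hcong : ∀ m m₁ m₂ : M, r m₁ m₂ → r (m * m₁) (m * m₂)) (m : M) :
    Quot r → Quot r :=
  Quot.lift (fun m' => Quot.mk r (m * m'))
    (fun a b hab => Quot.sound (hcong m a b hab))

/-- Let `∼` be a left congruence on a monoid `M` and let `ρ` be a right
action of a monoid `N` on `M/∼` commuting with the left `M`-action induced by
multiplication. Then there is a function `f : N → M` with `f(1) ∼ 1` and
`f(n n') ∼ f(n) f(n')` such that `ρ([m], n) = [m · f(n)]` for all `m`, `n`. -/
theorem quotient_right_action_form
    {M N : Type*} [Monoid M] [Monoid N]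
    (r : M → M → Prop) (hequiv : Equivalence r)
    (hcong : ∀ m m₁ m₂ : M, r m₁ m₂ → r (m * m₁) (m * m₂))
    (ρ : Quot r → N → Quot r)
    (hρ1 : ∀ x : Quot r, ρ x 1 = x)
    (hρmul : ∀ (x : Quot r) (n n' : N), ρ (ρ x n) n' = ρ x (n * n'))
    (hcomm : ∀ (m : M) (x : Quot r) (n : N),
      quotLeftAct r hcong m (ρ x n) = ρ (quotLeftAct r hcong m x) n) :
    ∃ f : N → M, r (f 1) 1 ∧ (∀ n n' : N, r (f (n * n')) (f n * f n')) ∧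
      ∀ (m : M) (n : N), ρ (Quot.mk r m) n = Quot.mk r (m * f n) := by
  classical
  set f : N → M := fun n => (ρ (Quot.mk r 1) n).out with hf
  have exact : ∀ a b : M, Quot.mk r a = Quot.mk r b → r a b := by
    intro a b h
    have := Quot.eqvGen_exact h
    rwa [hequiv.eqvGen_iff] at this
  have key : ∀ (m : M) (n : N), ρ (Quot.mk r m) n = Quot.mk r (m * f n) := by
    intro m n
    have h1 : Quot.mk r m = quotLeftAct r hcong m (Quot.mk r 1) := by
      simp [quotLeftAct]
    rw [h1, ← hcomm]
    have : ρ (Quot.mk r 1) n = Quot.mk r (f n) := (Quot.out_eq _).symm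
    rw [this]
    rfl
  refine ⟨f, ?_, ?_, key⟩
  · apply exact
    have := key 1 1
    rw [hρ1] at this
    rw [one_mul] at this
    exact this.symm
  · intro n n'
    apply exact
    have h1 := key 1 (n * n')
    rw [← hρmul, key 1 n, key (1 * f n) n', one_mul, one_mul] at h1
    exact h1.symm
end

section
/- Let M and N be monoids; let ∼ and ∼' be left congruences on M; let f, f' : N → M satisfy f(1) ∼ 1, f(n n') ∼ f(n) f(n'), f'(1) ∼' 1, f'(n n') ∼' f'(n) f'(n'); and equip M/∼ and M/∼' with the left M-action by multiplication and right N-actions [m]·n = [m f(n)] and [m]·n = [m f'(n)] respectively. (1) If η ∈ M satisfies (m ∼ m' implies m η ∼' m' η) and f(n) η ∼' η f'(n) for all n ∈ N, then h([m]) := [m η] is a well-defined map M/∼ → M/∼' commuting with both the left M-actions and the right N-actions. (2) Conversely, every map h : M/∼ → M/∼' commuting with both actions is of this form: there exists η ∈ M with h([1]) = [η], m ∼ m' implies m η ∼' m' η, f(n) η ∼' η f'(n) for all n, and h([m]) = [m η] for all m. -/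
/-- Let `∼`, `∼'` be left congruences on a monoid `M` and let
`f, f' : N → M` satisfy `f(1) ∼ 1`, `f(n n') ∼ f(n) f(n')`, `f'(1) ∼' 1`,
`f'(n n') ∼' f'(n) f'(n')`; equip `M/∼` and `M/∼'` with the left `M`-actions by
multiplication and the right `N`-actions `[m]·n = [m f(n)]`, `[m]·n = [m f'(n)]`.
(1) If `η ∈ M` satisfies `m ∼ m' → m η ∼' m' η` and `f(n) η ∼' η f'(n)`, then
`h([m]) := [m η]` is a well-defined map `M/∼ → M/∼'` commuting with both actions.
(2) Conversely, every map `M/∼ → M/∼'` commuting with both actions is of this form. -/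
theorem quotient_biset_hom_form
    {M N : Type*} [Monoid M] [Monoid N]
    (r r' : M → M → Prop) (hequiv : Equivalence r) (hequiv' : Equivalence r')
    (hcong : ∀ m m₁ m₂ : M, r m₁ m₂ → r (m * m₁) (m * m₂))
    (hcong' : ∀ m m₁ m₂ : M, r' m₁ m₂ → r' (m * m₁) (m * m₂))
    (f f' : N → M)
    (hf1 : r (f 1) 1) (hfmul : ∀ n n' : N, r (f (n * n')) (f n * f n'))
    (hf'1 : r' (f' 1) 1) (hf'mul : ∀ n n' : N, r' (f' (n * n')) (f' n * f' n')) :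
    -- (1) every suitable η induces a well-defined map commuting with both actions
    (∀ η : M,
      (∀ m m' : M, r m m' → r' (m * η) (m' * η)) →
      (∀ n : N, r' (f n * η) (η * f' n)) →
      ∃ hmap : Quot r → Quot r',
        (∀ m : M, hmap (Quot.mk r m) = Quot.mk r' (m * η)) ∧
          (∀ (m' : M) (x : Quot r),
            hmap (quotLeftAct r hcong m' x) = quotLeftAct r' hcong' m' (hmap x)) ∧
          (∀ (m : M) (n : N),
            hmap (Quot.mk r (m * f n)) = Quot.mk r' (m * η * f' n))) ∧
    -- (2) conversely every map commuting with both actions is of this form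
    (∀ hmap : Quot r → Quot r',
      (∀ (m' : M) (x : Quot r),
        hmap (quotLeftAct r hcong m' x) = quotLeftAct r' hcong' m' (hmap x)) →
      (∀ (m : M) (n : N) (m₂ : M), hmap (Quot.mk r m) = Quot.mk r' m₂ →
        hmap (Quot.mk r (m * f n)) = Quot.mk r' (m₂ * f' n)) →
      ∃ η : M,
        hmap (Quot.mk r 1) = Quot.mk r' η ∧
          (∀ m m' : M, r m m' → r' (m * η) (m' * η)) ∧
          (∀ n : N, r' (f n * η) (η * f' n)) ∧
          (∀ m : M, hmap (Quot.mk r m) = Quot.mk r' (m * η))) := by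
  constructor
  · intro η hη1 hη2
    refine ⟨Quot.lift (fun m => Quot.mk r' (m * η))
      (fun a b hab => Quot.sound (hη1 a b hab)), fun m => rfl, ?_, ?_⟩
    · intro m' x
      induction x using Quot.ind with
      | _ m => simp only [quotLeftAct, mul_assoc]
    · intro m n
      show Quot.mk r' (m * f n * η) = _
      apply Quot.sound
      rw [mul_assoc, mul_assoc]
      exact hcong' m _ _ (hη2 n)
  · intro hmap hA hB
    obtain ⟨η, hη⟩ := Quot.exists_rep (hmap (Quot.mk r 1))
    have key : ∀ m : M, hmap (Quot.mk r m) = Quot.mk r' (m * η) := by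
      intro m
      have : Quot.mk r m = quotLeftAct r hcong m (Quot.mk r 1) := by
        simp [quotLeftAct]
      rw [this, hA, ← hη]
      rfl
    have extract : ∀ a b : M, Quot.mk r' a = Quot.mk r' b → r' a b := by
      intro a b h
      exact hequiv'.eqvGen_iff.mp (Quot.eq.mp h)
    refine ⟨η, hη.symm, ?_, ?_, key⟩
    · intro m m' hr
      exact extract _ _ (by rw [← key, ← key, Quot.sound hr])
    · intro n
      have h1 := key (1 * f n)
      have h2 := hB 1 n η (key 1 |>.trans (by rw [one_mul]))
      rw [h1] at h2
      simpa using extract _ _ h2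
end

section
/- Given monoids H and N and a weakly Schreier datum (∼, φ, χ), the multiplication (h, [n]) · (h', [n']) := (h h', [n · φ(h,n') · χ(h,h')]) on the set of pairs (h, x) with h ∈ H and x ∈ N/∼ʰ is well-defined (independent of the representatives n, n'), associative, and has (1, [1]) as a two-sided unit, making this set into a monoid G(∼,φ,χ). -/
/-- A weakly Schreier datum `(∼, φ, χ)` for monoids `H` and `N`: a family of
equivalence relations `∼ʰ` on `N` indexed by `h ∈ H` together with functions
`φ : H × N → N` and `χ : H × H → N` satisfying conditions (i)–(x). -/
structure WeaklySchreierDatum (H N : Type*) [Monoid H] [Monoid N] where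
  sim : H → N → N → Prop
  /-- each `∼ʰ` is an equivalence relation -/
  equiv : ∀ h : H, Equivalence (sim h)
  /-- (i) each `∼ʰ` is a left congruence -/
  left_cong : ∀ (h : H) (n n₁ n₂ : N), sim h n₁ n₂ → sim h (n * n₁) (n * n₂)
  /-- (ii) `∼¹` is equality -/
  sim_one : ∀ n₁ n₂ : N, sim 1 n₁ n₂ ↔ n₁ = n₂
  phi : H → N → N
  chi : H → H → N
  /-- (iii) `φ(1,n) = n` -/
  one_phi : ∀ n : N, phi 1 n = n
  /-- (iv) `φ(h,1) ∼ʰ 1` -/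
  phi_one : ∀ h : H, sim h (phi h 1) 1
  /-- (v) `φ(h, n n') ∼ʰ φ(h,n) φ(h,n')` -/
  phi_mul : ∀ (h : H) (n n' : N), sim h (phi h (n * n')) (phi h n * phi h n')
  /-- (vi) `φ(h, φ(h',n)) χ(h,h') ∼^{h h'} χ(h,h') φ(h h', n)` -/
  compat : ∀ (h h' : H) (n : N),
    sim (h * h') (phi h (phi h' n) * chi h h') (chi h h' * phi (h * h') n)
  /-- (vii) the combined congruence condition for the multiplication -/
  mul_cong : ∀ (h h' : H) (n₁ n₂ n'₁ n'₂ : N),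
    sim h n₁ n₂ → sim h' n'₁ n'₂ →
      sim (h * h') (n₁ * phi h n'₁ * chi h h') (n₂ * phi h n'₂ * chi h h')
  /-- (viii) `n₁ ∼ʰ n₂` implies `n₁ χ(h,h') ∼^{h h'} n₂ χ(h,h')` -/
  chi_cong : ∀ (h h' : H) (n₁ n₂ : N),
    sim h n₁ n₂ → sim (h * h') (n₁ * chi h h') (n₂ * chi h h')
  /-- (ix) `χ(1,h) ∼ʰ 1` and `χ(h,1) ∼ʰ 1` -/
  chi_one_left : ∀ h : H, sim h (chi 1 h) 1
  chi_one_right : ∀ h : H, sim h (chi h 1) 1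
  /-- (x) the cocycle condition -/
  cocycle : ∀ x y z : H,
    sim (x * y * z) (chi x y * chi (x * y) z) (phi x (chi y z) * chi x (y * z))

variable {H N : Type*} [Monoid H] [Monoid N]

/-- The underlying set of `G(∼,φ,χ)`: pairs `(h, [n])` with `h ∈ H` and
`[n] ∈ N/∼ʰ`. -/
def WSProd (D : WeaklySchreierDatum H N) : Type _ :=
  (h : H) × Quot (D.sim h)

/-- The multiplication `(h,[n]) · (h',[n']) = (h h', [n φ(h,n') χ(h,h')])` on
`G(∼,φ,χ)`; it is well defined by condition (vii). -/
def wsMul (D : WeaklySchreierDatum H N) (p q : WSProd D) : WSProd D :=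
  ⟨p.1 * q.1,
    Quot.lift₂
      (fun n n' => Quot.mk (D.sim (p.1 * q.1)) (n * D.phi p.1 n' * D.chi p.1 q.1))
      (fun n n'₁ n'₂ hsim => Quot.sound
        (D.mul_cong p.1 q.1 n n n'₁ n'₂ ((D.equiv p.1).refl n) hsim))
      (fun n₁ n₂ n' hsim => Quot.sound
        (D.mul_cong p.1 q.1 n₁ n₂ n' n' hsim ((D.equiv q.1).refl n')))
      p.2 q.2⟩

/-- The unit `(1, [1])` of `G(∼,φ,χ)`. -/
def wsOne (D : WeaklySchreierDatum H N) : WSProd D :=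
  ⟨1, Quot.mk (D.sim 1) 1⟩

/-! Associativity: after cancelling the common left factor `n`, expand
`φ(h, n' φ(h',n'') χ(h',h'')) χ(h,h'h'')` with (v), trade `φ(h, χ(h',h'')) χ(h,h'h'')` for
`χ(h,h') χ(hh',h'')` by the cocycle condition (x), and move `χ(h,h')` past `φ(h, φ(h',n''))`
by (vi). The unit laws come from (iii), (iv) and (ix). -/

namespace WeaklySchreierDatum

variable (D : WeaklySchreierDatum H N)

instance (k : H) : Trans (D.sim k) (D.sim k) (D.sim k) := ⟨(D.equiv k).trans⟩

theorem sim_phi_mul_chi (h k : H) (a b : N) :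
    D.sim (h * k) (D.phi h (a * b) * D.chi h k) (D.phi h a * D.phi h b * D.chi h k) :=
  D.chi_cong h k _ _ (D.phi_mul h a b)

theorem sim_assoc (h h' h'' : H) (n' n'' : N) :
    D.sim (h * h' * h'')
      (D.phi h n' * D.chi h h' * D.phi (h * h') n'' * D.chi (h * h') h'')
      (D.phi h (n' * D.phi h' n'' * D.chi h' h'') * D.chi h (h' * h'')) := by
  refine (D.equiv _).symm ?_
  have distrib : D.sim (h * h' * h'')
      (D.phi h (n' * D.phi h' n'' * D.chi h' h'') * D.chi h (h' * h''))
      (D.phi h n' * D.phi h (D.phi h' n'') * D.phi h (D.chi h' h'') * D.chi h (h' * h'')) :=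
    mul_assoc h h' h'' ▸ (D.equiv _).trans (D.sim_phi_mul_chi h (h' * h'') _ _)
      (D.mul_cong h (h' * h'') _ _ _ _ (D.phi_mul h n' _) ((D.equiv _).refl _))
  calc D.sim (h * h' * h'') _ _ := distrib
    _ = D.phi h n' * D.phi h (D.phi h' n'') * (D.phi h (D.chi h' h'') * D.chi h (h' * h'')) := by
        simp only [mul_assoc]
    D.sim _ _ (D.phi h n' * D.phi h (D.phi h' n'') * (D.chi h h' * D.chi (h * h') h'')) :=
        D.left_cong _ _ _ _ ((D.equiv _).symm (D.cocycle h h' h''))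
    _ = D.phi h n' * (D.phi h (D.phi h' n'') * D.chi h h' * D.chi (h * h') h'') := by
        simp only [mul_assoc]
    D.sim _ _ (D.phi h n' * (D.chi h h' * D.phi (h * h') n'' * D.chi (h * h') h'')) :=
        D.left_cong _ _ _ _ (D.chi_cong (h * h') h'' _ _ (D.compat h h' n''))
    _ = _ := by simp only [mul_assoc]

end WeaklySchreierDatum

section

variable {D : WeaklySchreierDatum H N}

theorem WSProd.mk_eq_mk {h₁ h₂ : H} (e : h₁ = h₂) {n₁ n₂ : N} (hs : D.sim h₁ n₁ n₂) :
    (⟨h₁, Quot.mk _ n₁⟩ : WSProd D) = ⟨h₂, Quot.mk _ n₂⟩ := by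
  subst e
  rw [Quot.sound hs]

@[simp]
theorem wsMul_mk (h h' : H) (n n' : N) :
    wsMul D ⟨h, Quot.mk _ n⟩ ⟨h', Quot.mk _ n'⟩ =
      ⟨h * h', Quot.mk _ (n * D.phi h n' * D.chi h h')⟩ :=
  rfl

theorem wsMul_assoc (p q r : WSProd D) : wsMul D (wsMul D p q) r = wsMul D p (wsMul D q r) := by
  obtain ⟨h, ⟨n⟩⟩ := p
  obtain ⟨h', ⟨n'⟩⟩ := q
  obtain ⟨h'', ⟨n''⟩⟩ := r
  simp only [wsMul_mk]
  refine WSProd.mk_eq_mk (mul_assoc h h' h'') ?_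
  simpa only [mul_assoc] using D.left_cong _ n _ _ (D.sim_assoc h h' h'' n' n'')

theorem one_wsMul (p : WSProd D) : wsMul D (wsOne D) p = p := by
  obtain ⟨h, ⟨n⟩⟩ := p
  rw [wsOne, wsMul_mk]
  refine WSProd.mk_eq_mk (one_mul h) ?_
  simpa only [one_mul, D.one_phi, mul_one] using D.left_cong h n _ _ (D.chi_one_left h)

theorem wsMul_one (p : WSProd D) : wsMul D p (wsOne D) = p := by
  obtain ⟨h, ⟨n⟩⟩ := p
  rw [wsOne, wsMul_mk]
  refine WSProd.mk_eq_mk (mul_one h) ?_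
  have phi_one : D.sim (h * 1) (n * D.phi h 1 * D.chi h 1) (n * D.chi h 1) := by
    simpa only [mul_one] using D.chi_cong h 1 _ _ (D.left_cong h n _ _ (D.phi_one h))
  have chi_one : D.sim h (n * D.chi h 1) n := by
    simpa only [mul_one] using D.left_cong h n _ _ (D.chi_one_right h)
  exact (D.equiv _).trans phi_one (by rwa [mul_one])

end

/-- Given a weakly Schreier datum `(∼, φ, χ)`, the multiplication
`(h,[n]) · (h',[n']) = (h h', [n φ(h,n') χ(h,h')])` on pairs `(h, x)` with `h ∈ H`
and `x ∈ N/∼ʰ` is well-defined (independent of the representatives), associative,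
and has `(1, [1])` as a two-sided unit. -/
theorem wsMul_monoid (D : WeaklySchreierDatum H N) :
    ∃ mul : WSProd D → WSProd D → WSProd D,
      -- well-definedness: the multiplication is given on representatives by the formula
      (∀ (h h' : H) (n n' : N),
        mul ⟨h, Quot.mk (D.sim h) n⟩ ⟨h', Quot.mk (D.sim h') n'⟩ =
          ⟨h * h', Quot.mk (D.sim (h * h')) (n * D.phi h n' * D.chi h h')⟩) ∧
        -- associativity
        (∀ p q r : WSProd D, mul (mul p q) r = mul p (mul q r)) ∧
        -- (1, [1]) is a two-sided unit
        (∀ p : WSProd D, mul (wsOne D) p = p) ∧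
        (∀ p : WSProd D, mul p (wsOne D) = p) :=
  ⟨wsMul D, wsMul_mk, wsMul_assoc, one_wsMul, wsMul_one⟩
end

section
/- Given monoids H and N and a weakly Schreier datum (∼, φ, χ), let G(∼,φ,χ) be the monoid of pairs (h, [n]) with h ∈ H and [n] ∈ N/∼ʰ, multiplication (h,[n])·(h',[n']) = (h h', [n φ(h,n') χ(h,h')]) and unit (1,[1]). Then the first projection π : G(∼,φ,χ) → H is a surjective monoid homomorphism; the map ι : N → G(∼,φ,χ), ι(n) = (1, [n]), is an injective monoid homomorphism whose image is exactly π⁻¹(1); and the resulting extension N --ι--> G(∼,φ,χ) --π--> H is weakly Schreier: for each h ∈ H the element u_h = (h, [1]) satisfies π(u_h) = h and every element of π⁻¹(h) equals ι(n) · u_h for some n ∈ N. -/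
variable {H N : Type*} [Monoid H] [Monoid N]

theorem wsMk_eq (D : WeaklySchreierDatum H N) {a b : H} (e : a = b) {n m : N}
    (hs : D.sim b n m) :
    (⟨a, Quot.mk (D.sim a) n⟩ : WSProd D) = ⟨b, Quot.mk (D.sim b) m⟩ := by
  subst e
  exact congrArg (Sigma.mk a) (Quot.sound hs)

/-- For a weakly Schreier datum `(∼, φ, χ)` and the monoid `G(∼,φ,χ)`,
the first projection `π` is a surjective monoid homomorphism, `ι : n ↦ (1, [n])` is
an injective monoid homomorphism whose image is exactly `π⁻¹(1)`, and the resulting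
extension is weakly Schreier, witnessed by `u_h = (h, [1])`. -/
theorem wsMul_extension_is_weakly_schreier (D : WeaklySchreierDatum H N) :
    -- π is a monoid homomorphism
    (∀ p q : WSProd D, (wsMul D p q).1 = p.1 * q.1) ∧
      ((wsOne D).1 = 1) ∧
      -- π is surjective
      Function.Surjective (fun p : WSProd D => p.1) ∧
      -- ι is a monoid homomorphism
      (∀ n n' : N,
        wsMul D ⟨1, Quot.mk (D.sim 1) n⟩ ⟨1, Quot.mk (D.sim 1) n'⟩ =
          ⟨1, Quot.mk (D.sim 1) (n * n')⟩) ∧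
      ((⟨1, Quot.mk (D.sim 1) 1⟩ : WSProd D) = wsOne D) ∧
      -- ι is injective
      Function.Injective (fun n : N => (⟨1, Quot.mk (D.sim 1) n⟩ : WSProd D)) ∧
      -- the image of ι is exactly π⁻¹(1)
      (∀ p : WSProd D,
        (∃ n : N, (⟨1, Quot.mk (D.sim 1) n⟩ : WSProd D) = p) ↔ p.1 = 1) ∧
      -- the extension is weakly Schreier, witnessed by u_h = (h, [1])
      (∀ h : H, ((⟨h, Quot.mk (D.sim h) 1⟩ : WSProd D)).1 = h ∧
        ∀ p : WSProd D, p.1 = h →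
          ∃ n : N,
            wsMul D ⟨1, Quot.mk (D.sim 1) n⟩ ⟨h, Quot.mk (D.sim h) 1⟩ = p) := by
  refine ⟨fun p q => rfl, rfl, fun h => ⟨⟨h, Quot.mk _ 1⟩, rfl⟩, ?_, rfl, ?_, ?_, ?_⟩
  · intro n n'
    refine wsMk_eq D (one_mul 1) ?_
    rw [(D.sim_one _ _), D.one_phi, (D.sim_one _ _).1 (D.chi_one_left 1), mul_one]
  · intro n n' hnn'
    have h2 : Quot.mk (D.sim 1) n = Quot.mk (D.sim 1) n' := by
      injection hnn' 
    exact congrArg (Quot.lift id (fun a b hab => (D.sim_one a b).1 hab)) h2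
  · intro p
    constructor
    · rintro ⟨n, rfl⟩; rfl
    · obtain ⟨h, q⟩ := p
      rintro rfl
      obtain ⟨n⟩ := q
      exact ⟨n, rfl⟩
  · intro h
    refine ⟨rfl, ?_⟩
    rintro ⟨h', q⟩ rfl
    obtain ⟨n⟩ := q
    refine ⟨n, wsMk_eq D (one_mul h') ?_⟩
    have h1 := D.left_cong h' n _ _ (D.chi_one_left h')
    rw [mul_one] at h1
    rw [D.one_phi, mul_one]
    exact h1
end

section
/- Let N --k--> G --e--> H be a weakly Schreier extension of monoids, let u : H → G satisfy e(u_h) = h, u_1 = 1, and that every g ∈ G with e(g) = h equals k(n) u_h for some n ∈ N, and let φ : H × N → N and χ : H × H → N be any functions satisfying k(φ(h,n)) · u_h = u_h · k(n) and k(χ(h,h')) · u_{h h'} = u_h · u_{h'} for all h, h' ∈ H, n ∈ N. Define, for each h ∈ H, the relation n ∼ʰ n' if and only if k(n) u_h = k(n') u_h. Then (∼, φ, χ) is a weakly Schreier datum for H and N, i.e. conditions (i)–(x) all hold. -/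
variable {H N : Type*} [Monoid H] [Monoid N]

/-- Given a weakly Schreier extension N --k--> G --e--> H with choices
`u : H → G` (with `e (u h) = h`, `u 1 = 1` and every fibre element factoring as
`k(n) u_h`), and functions `φ`, `χ` with `k(φ(h,n)) u_h = u_h k(n)` and
`k(χ(h,h')) u_{hh'} = u_h u_{h'}`, the data `(∼, φ, χ)` with
`n ∼ʰ n' ↔ k(n) u_h = k(n') u_h` is a weakly Schreier datum, i.e. conditions
(i)–(x) all hold. -/
theorem weakly_schreier_extension_gives_datum
    {G : Type*} [Monoid G]
    (k : N →* G) (e : G →* H)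
    (hk : Function.Injective k) (he : Function.Surjective e)
    (hker : ∀ g : G, (∃ n : N, k n = g) ↔ e g = 1)
    (u : H → G) (hu : ∀ h : H, e (u h) = h) (hu1 : u 1 = 1)
    (hfac : ∀ (h : H) (g : G), e g = h → ∃ n : N, k n * u h = g)
    (φ : H → N → N) (χ : H → H → N)
    (hφ : ∀ (h : H) (n : N), k (φ h n) * u h = u h * k n)
    (hχ : ∀ h h' : H, k (χ h h') * u (h * h') = u h * u h') :
    ∃ D : WeaklySchreierDatum H N,
      D.sim = (fun (h : H) (n n' : N) => k n * u h = k n' * u h) ∧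
        D.phi = φ ∧ D.chi = χ := by
  refine ⟨⟨fun h n n' => k n * u h = k n' * u h, ?_, ?_, ?_, φ, χ, ?_, ?_, ?_, ?_, ?_, ?_, ?_,
    ?_, ?_⟩, rfl, rfl, rfl⟩
  · exact fun h => ⟨fun n => rfl, fun h => h.symm, fun h h' => h.trans h'⟩
  · intro h n n₁ n₂ hs
    simp only [map_mul, mul_assoc, hs]
  · intro n₁ n₂
    constructor
    · intro hs
      apply hk
      simpa [hu1] using hs
    · rintro rfl; rfl
  · intro n
    apply hk
    have := hφ 1 n
    simpa [hu1] using this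
  · intro h
    have := hφ h 1
    simpa using this
  · intro h n n'
    have h1 := hφ h (n * n')
    have h2 := hφ h n
    have h3 := hφ h n'
    calc k (φ h (n * n')) * u h = u h * k n * k n' := by
          rw [h1]; simp [map_mul, mul_assoc]
      _ = k (φ h n) * (u h * k n') := by rw [← h2]; simp [mul_assoc]
      _ = k (φ h n * φ h n') * u h := by rw [← h3]; simp [map_mul, mul_assoc]
  · intro h h' n
    calc k (φ h (φ h' n) * χ h h') * u (h * h')
        = k (φ h (φ h' n)) * (u h * u h') := by rw [map_mul, mul_assoc, hχ]
      _ = u h * k (φ h' n) * u h' := by rw [← mul_assoc, hφ]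
      _ = u h * (u h' * k n) := by rw [mul_assoc, hφ]
      _ = k (χ h h') * u (h * h') * k n := by rw [hχ, mul_assoc]
      _ = k (χ h h') * (k (φ (h * h') n) * u (h * h')) := by rw [hφ, mul_assoc]
      _ = k (χ h h' * φ (h * h') n) * u (h * h') := by rw [map_mul, mul_assoc]
  · intro h h' n₁ n₂ n'₁ n'₂ hs hs'
    have key : ∀ a b : N, k a * u h = k n₂ * u h → k b * u h' = k n'₂ * u h' →
        k (a * φ h b * χ h h') * u (h * h') = k n₂ * u h * (k n'₂ * u h') := by
      intro a b ha hb
      calc k (a * φ h b * χ h h') * u (h * h')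
          = k a * k (φ h b) * (u h * u h') := by
            rw [map_mul, map_mul, mul_assoc, hχ, mul_assoc]
        _ = k a * (k (φ h b) * u h) * u h' := by simp [mul_assoc]
        _ = k a * (u h * k b) * u h' := by rw [hφ]
        _ = (k a * u h) * (k b * u h') := by simp [mul_assoc]
        _ = k n₂ * u h * (k n'₂ * u h') := by rw [ha, hb]
    rw [key n₁ n'₁ hs hs', key n₂ n'₂ rfl rfl]
  · intro h h' n₁ n₂ hs
    calc k (n₁ * χ h h') * u (h * h') = k n₁ * u h * u h' := by
          rw [map_mul, mul_assoc, hχ, mul_assoc]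
      _ = k n₂ * u h * u h' := by rw [hs]
      _ = k (n₂ * χ h h') * u (h * h') := by rw [map_mul, mul_assoc (k n₂) (k (χ h h')), hχ, ← mul_assoc]
  · intro h
    have := hχ 1 h
    rw [one_mul, hu1, one_mul] at this
    simp [this]
  · intro h
    have := hχ h 1
    rw [mul_one, hu1, mul_one] at this
    simp [this]
  · intro x y z
    calc k (χ x y * χ (x * y) z) * u (x * y * z)
        = k (χ x y) * (u (x * y) * u z) := by rw [map_mul, mul_assoc, hχ]
      _ = u x * u y * u z := by rw [← mul_assoc, hχ]
      _ = u x * (k (χ y z) * u (y * z)) := by rw [mul_assoc, hχ]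
      _ = k (φ x (χ y z)) * u x * u (y * z) := by rw [← mul_assoc, hφ]
      _ = k (φ x (χ y z)) * (k (χ x (y * z)) * u (x * (y * z))) := by rw [mul_assoc, hχ]
      _ = k (φ x (χ y z) * χ x (y * z)) * u (x * y * z) := by
            rw [map_mul, mul_assoc, mul_assoc]
end

section
/- Let H and N be monoids, let (∼₁, φ₁, χ₁) and (∼₂, φ₂, χ₂) be weakly Schreier data for H and N, and let ψ : H → N be a function satisfying: ψ(1) = 1; φ₁(h,n) ψ(h) ∼₂ʰ ψ(h) φ₂(h,n) for all h, n; n ∼₁ʰ n' implies n ψ(h) ∼₂ʰ n' ψ(h); and χ₁(h,h') ψ(h h') ∼₂^{h h'} ψ(h) φ₂(h, ψ(h')) χ₂(h,h') for all h, h'. Then the map t_ψ : G(∼₁,φ₁,χ₁) → G(∼₂,φ₂,χ₂) given by t_ψ(h, [n]) = (h, [n ψ(h)]) is well-defined and is a monoid homomorphism satisfying π₂ ∘ t_ψ = π₁ and t_ψ(1, [n]) = (1, [n]) for all n ∈ N. -/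
variable {H N : Type*} [Monoid H] [Monoid N]

/-- Given weakly Schreier data `(∼₁, φ₁, χ₁)` and `(∼₂, φ₂, χ₂)` and a
function `ψ : H → N` satisfying the morphism conditions, the map
`t_ψ(h, [n]) = (h, [n ψ(h)])` is well-defined and is a monoid homomorphism
`G(∼₁,φ₁,χ₁) → G(∼₂,φ₂,χ₂)` over `H` fixing the kernel `N`. -/
theorem weakly_schreier_psi_map_hom
    (D₁ D₂ : WeaklySchreierDatum H N) (ψ : H → N)
    (hψ1 : ψ 1 = 1)
    (hψφ : ∀ (h : H) (n : N), D₂.sim h (D₁.phi h n * ψ h) (ψ h * D₂.phi h n))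
    (hψcong : ∀ (h : H) (n n' : N),
      D₁.sim h n n' → D₂.sim h (n * ψ h) (n' * ψ h))
    (hψχ : ∀ h h' : H,
      D₂.sim (h * h') (D₁.chi h h' * ψ (h * h'))
        (ψ h * D₂.phi h (ψ h') * D₂.chi h h')) :
    ∃ t : WSProd D₁ → WSProd D₂,
      -- t is well-defined and given on representatives by t(h, [n]) = (h, [n ψ(h)])
      (∀ (h : H) (n : N),
        t ⟨h, Quot.mk (D₁.sim h) n⟩ = ⟨h, Quot.mk (D₂.sim h) (n * ψ h)⟩) ∧
        -- t is a monoid homomorphism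
        (∀ p q : WSProd D₁, t (wsMul D₁ p q) = wsMul D₂ (t p) (t q)) ∧
        (t (wsOne D₁) = wsOne D₂) ∧
        -- π₂ ∘ t = π₁
        (∀ p : WSProd D₁, (t p).1 = p.1) ∧
        -- t fixes the kernel
        (∀ n : N,
          t ⟨1, Quot.mk (D₁.sim 1) n⟩ = ⟨1, Quot.mk (D₂.sim 1) n⟩) := by
 classical
  refine ⟨fun p => ⟨p.1, Quot.lift (fun n => Quot.mk (D₂.sim p.1) (n * ψ p.1))
      (fun a b hab => Quot.sound (hψcong p.1 a b hab)) p.2⟩, fun h n => rfl, ?_, ?_, ?_, ?_⟩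
  · rintro ⟨h, x⟩ ⟨h', y⟩
    induction x using Quot.ind with
    | _ n =>
    induction y using Quot.ind with
    | _ n' =>
    show (⟨h * h', Quot.mk _ (n * D₁.phi h n' * D₁.chi h h' * ψ (h * h'))⟩ : WSProd D₂)
        = ⟨h * h', Quot.mk _ ((n * ψ h) * D₂.phi h (n' * ψ h') * D₂.chi h h')⟩
    congr 1
    apply Quot.sound
    have E := D₂.equiv (h * h')
    have step1 : D₂.sim (h * h') (n * D₁.phi h n' * D₁.chi h h' * ψ (h * h'))
        ((n * D₁.phi h n') * (ψ h * D₂.phi h (ψ h') * D₂.chi h h')) := by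
      have := D₂.left_cong (h * h') (n * D₁.phi h n') _ _ (hψχ h h')
      simpa [mul_assoc] using this
    have step2 : D₂.sim (h * h')
        ((n * D₁.phi h n' * ψ h) * D₂.phi h (ψ h') * D₂.chi h h')
        ((n * ψ h * D₂.phi h n') * D₂.phi h (ψ h') * D₂.chi h h') := by
      apply D₂.mul_cong h h' _ _ _ _ _ ((D₂.equiv h').refl (ψ h'))
      have := D₂.left_cong h n _ _ (hψφ h n')
      simpa [mul_assoc] using this
    have step3 : D₂.sim (h * h')
        ((n * ψ h) * D₂.phi h (n' * ψ h') * D₂.chi h h')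
        ((n * ψ h * D₂.phi h n') * D₂.phi h (ψ h') * D₂.chi h h') := by
      apply D₂.chi_cong
      have := D₂.left_cong h (n * ψ h) _ _ (D₂.phi_mul h n' (ψ h'))
      simpa [mul_assoc] using this
    refine E.trans step1 ?_
    refine E.trans ?_ (E.symm step3)
    have : (n * D₁.phi h n') * (ψ h * D₂.phi h (ψ h') * D₂.chi h h')
        = (n * D₁.phi h n' * ψ h) * D₂.phi h (ψ h') * D₂.chi h h' := by
      simp [mul_assoc]
    rw [this]
    exact step2
  · show (⟨(1 : H), Quot.mk _ ((1 : N) * ψ 1)⟩ : WSProd D₂) = ⟨1, Quot.mk _ 1⟩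
    simp [hψ1, wsOne]
  · rintro ⟨h, x⟩; rfl
  · intro n
    show (⟨(1 : H), Quot.mk _ (n * ψ 1)⟩ : WSProd D₂) = ⟨1, Quot.mk _ n⟩
    simp [hψ1]
end

section
/- Let H and N be monoids, let (∼₁, φ₁, χ₁) and (∼₂, φ₂, χ₂) be weakly Schreier data for H and N, and let ψ, ψ' : H → N both satisfy the morphism conditions (ψ(1) = 1; φ₁(h,n) ψ(h) ∼₂ʰ ψ(h) φ₂(h,n); n ∼₁ʰ n' implies n ψ(h) ∼₂ʰ n' ψ(h); χ₁(h,h') ψ(h h') ∼₂^{h h'} ψ(h) φ₂(h, ψ(h')) χ₂(h,h'), and likewise for ψ'). Then the induced monoid homomorphisms t_ψ, t_{ψ'} : G(∼₁,φ₁,χ₁) → G(∼₂,φ₂,χ₂), t_ψ(h,[n]) = (h,[n ψ(h)]), are equal if and only if ψ(h) ∼₂ʰ ψ'(h) for all h ∈ H. -/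
variable {H N : Type*} [Monoid H] [Monoid N]

/-- The map `t_ψ(h, [n]) = (h, [n ψ(h)])` induced by `ψ : H → N`; it is well defined
by the congruence condition on `ψ`. -/
def wsPsiMap (D₁ D₂ : WeaklySchreierDatum H N) (ψ : H → N)
    (hψcong : ∀ (h : H) (n n' : N),
      D₁.sim h n n' → D₂.sim h (n * ψ h) (n' * ψ h)) :
    WSProd D₁ → WSProd D₂ :=
  fun p =>
    ⟨p.1, Quot.lift (fun n => Quot.mk (D₂.sim p.1) (n * ψ p.1))
      (fun a b hab => Quot.sound (hψcong p.1 a b hab)) p.2⟩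

/-- Given weakly Schreier data `(∼₁, φ₁, χ₁)`, `(∼₂, φ₂, χ₂)` and
`ψ, ψ' : H → N` both satisfying the morphism conditions, the induced monoid
homomorphisms `t_ψ, t_{ψ'} : G(∼₁,φ₁,χ₁) → G(∼₂,φ₂,χ₂)` are equal if and only if
`ψ(h) ∼₂ʰ ψ'(h)` for all `h ∈ H`. -/
theorem weakly_schreier_psi_map_eq_iff
    (D₁ D₂ : WeaklySchreierDatum H N) (ψ ψ' : H → N)
    (hψ1 : ψ 1 = 1)
    (hψφ : ∀ (h : H) (n : N), D₂.sim h (D₁.phi h n * ψ h) (ψ h * D₂.phi h n))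
    (hψcong : ∀ (h : H) (n n' : N),
      D₁.sim h n n' → D₂.sim h (n * ψ h) (n' * ψ h))
    (hψχ : ∀ h h' : H,
      D₂.sim (h * h') (D₁.chi h h' * ψ (h * h'))
        (ψ h * D₂.phi h (ψ h') * D₂.chi h h'))
    (hψ'1 : ψ' 1 = 1)
    (hψ'φ : ∀ (h : H) (n : N), D₂.sim h (D₁.phi h n * ψ' h) (ψ' h * D₂.phi h n))
    (hψ'cong : ∀ (h : H) (n n' : N),
      D₁.sim h n n' → D₂.sim h (n * ψ' h) (n' * ψ' h))
    (hψ'χ : ∀ h h' : H,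
      D₂.sim (h * h') (D₁.chi h h' * ψ' (h * h'))
        (ψ' h * D₂.phi h (ψ' h') * D₂.chi h h')) :
    wsPsiMap D₁ D₂ ψ hψcong = wsPsiMap D₁ D₂ ψ' hψ'cong ↔
      ∀ h : H, D₂.sim h (ψ h) (ψ' h) := by
  constructor
  · intro heq h
    have this1 : (⟨h, Quot.mk (D₂.sim h) (1 * ψ h)⟩ : (h : H) × Quot (D₂.sim h))
        = ⟨h, Quot.mk (D₂.sim h) (1 * ψ' h)⟩ := congrFun heq ⟨h, Quot.mk _ 1⟩
    injection this1 with _ this2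
    have h2 := Quot.eqvGen_exact this2
    have h3 : D₂.sim h (1 * ψ h) (1 * ψ' h) :=
      ((D₂.equiv h).eqvGen_iff).mp h2
    simpa using h3
  · intro hsim
    funext p
    obtain ⟨h, q⟩ := p
    obtain ⟨n, rfl⟩ := q.exists_rep
    exact congrArg (Sigma.mk h) (Quot.sound (D₂.left_cong h n _ _ (hsim h)))
end

section
/- Let H and N be monoids, let (∼₁, φ₁, χ₁) and (∼₂, φ₂, χ₂) be weakly Schreier data for H and N, let ψ : H → N satisfy the morphism conditions from (∼₁,φ₁,χ₁) to (∼₂,φ₂,χ₂), and let ψ* : H → N satisfy the morphism conditions from (∼₂,φ₂,χ₂) to (∼₁,φ₁,χ₁). Then the induced monoid homomorphisms t_ψ : G(∼₁,φ₁,χ₁) → G(∼₂,φ₂,χ₂) and t_{ψ*} : G(∼₂,φ₂,χ₂) → G(∼₁,φ₁,χ₁), given by t_ψ(h,[n]) = (h,[n ψ(h)]) and t_{ψ*}(h,[n]) = (h,[n ψ*(h)]), are mutually inverse if and only if ψ(h) ψ*(h) ∼₁ʰ 1 and ψ*(h) ψ(h) ∼₂ʰ 1 for all h ∈ H. -/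
variable {H N : Type*} [Monoid H] [Monoid N]

/-- Given weakly Schreier data `(∼₁, φ₁, χ₁)`, `(∼₂, φ₂, χ₂)`, a
function `ψ : H → N` satisfying the morphism conditions from the first datum to the
second, and `ψ* : H → N` satisfying the morphism conditions from the second to the
first, the induced monoid homomorphisms `t_ψ` and `t_{ψ*}` are mutually inverse if
and only if `ψ(h) ψ*(h) ∼₁ʰ 1` and `ψ*(h) ψ(h) ∼₂ʰ 1` for all `h ∈ H`. -/
theorem weakly_schreier_psi_map_inverse_iff
    (D₁ D₂ : WeaklySchreierDatum H N) (ψ ψstar : H → N)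
    (hψ1 : ψ 1 = 1)
    (hψφ : ∀ (h : H) (n : N), D₂.sim h (D₁.phi h n * ψ h) (ψ h * D₂.phi h n))
    (hψcong : ∀ (h : H) (n n' : N),
      D₁.sim h n n' → D₂.sim h (n * ψ h) (n' * ψ h))
    (hψχ : ∀ h h' : H,
      D₂.sim (h * h') (D₁.chi h h' * ψ (h * h'))
        (ψ h * D₂.phi h (ψ h') * D₂.chi h h'))
    (hψstar1 : ψstar 1 = 1)
    (hψstarφ : ∀ (h : H) (n : N),
      D₁.sim h (D₂.phi h n * ψstar h) (ψstar h * D₁.phi h n))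
    (hψstarcong : ∀ (h : H) (n n' : N),
      D₂.sim h n n' → D₁.sim h (n * ψstar h) (n' * ψstar h))
    (hψstarχ : ∀ h h' : H,
      D₁.sim (h * h') (D₂.chi h h' * ψstar (h * h'))
        (ψstar h * D₁.phi h (ψstar h') * D₁.chi h h')) :
    ((∀ p : WSProd D₁,
        wsPsiMap D₂ D₁ ψstar hψstarcong (wsPsiMap D₁ D₂ ψ hψcong p) = p) ∧
      (∀ q : WSProd D₂,
        wsPsiMap D₁ D₂ ψ hψcong (wsPsiMap D₂ D₁ ψstar hψstarcong q) = q)) ↔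
      (∀ h : H, D₁.sim h (ψ h * ψstar h) 1 ∧ D₂.sim h (ψstar h * ψ h) 1) := by
  constructor
  · rintro ⟨h1, h2⟩ h
    constructor
    · have e := h1 ⟨h, Quot.mk _ 1⟩
      simp only [wsPsiMap] at e
      obtain ⟨-, e2⟩ := Sigma.mk.inj_iff.mp e
      have e3 : Quot.mk (D₁.sim h) (1 * ψ h * ψstar h) = Quot.mk (D₁.sim h) 1 :=
        eq_of_heq e2
      have := ((D₁.equiv h).eqvGen_iff).mp (Quot.eq.mp e3)
      simpa using this
    · have e := h2 ⟨h, Quot.mk _ 1⟩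
      simp only [wsPsiMap] at e
      obtain ⟨-, e2⟩ := Sigma.mk.inj_iff.mp e
      have e3 : Quot.mk (D₂.sim h) (1 * ψstar h * ψ h) = Quot.mk (D₂.sim h) 1 :=
        eq_of_heq e2
      have := ((D₂.equiv h).eqvGen_iff).mp (Quot.eq.mp e3)
      simpa using this
  · rintro hinv
    constructor
    · rintro ⟨h, q⟩
      obtain ⟨n⟩ := q
      simp only [wsPsiMap]
      refine Sigma.ext rfl (heq_of_eq (Quot.sound ?_))
      have := D₁.left_cong h n _ _ (hinv h).1
      simpa [mul_assoc] using this
    · rintro ⟨h, q⟩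
      obtain ⟨n⟩ := q
      simp only [wsPsiMap]
      refine Sigma.ext rfl (heq_of_eq (Quot.sound ?_))
      have := D₂.left_cong h n _ _ (hinv h).2
      simpa [mul_assoc] using this
end
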